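/- arXiv:2109.10709 — 4 statements merged into one kernel-verified Lean document; each statement's English description precedes it below -/
import Mathlib

section
/- Let ξ, η be {∧,∨}-sequences of length r. Define ξ ⪯ η if ξ can be obtained from η by repeatedly replacing a pair of entries at positions i<j equal to (∨,∧) or (∧,∧) by the opposite pair. Then ξ ⪯ η if and only if ξ and η are conjugate (same length and same number of ∧'s mod 2) and l_i(η,ξ) ≥ 0 for all i ∈ {2,…,r}. -/
/-- Number of `∧`'s (encoded as `true`) in a `{∧,∨}`-sequence. -/
def countWedge {r : ℕ} (η : Fin r → Bool) : ℕ :=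
  (Finset.univ.filter fun k => η k = true).card

/-- `l_i(η)`: the number of positions `j ≥ i` with `η_j = ∧`. -/
def lFrom {r : ℕ} (η : Fin r → Bool) (i : Fin r) : ℕ :=
  (Finset.univ.filter fun j => i ≤ j ∧ η j = true).card

/-- One elementary move: `ξ` is obtained from `η` by replacing a pair of entries at
positions `i < j` equal to `(∨,∧)` or `(∧,∧)` by the opposite pair. -/
def ArrowStep {r : ℕ} (η ξ : Fin r → Bool) : Prop :=
  ∃ i j : Fin r, i < j ∧ η j = true ∧ ξ i = !(η i) ∧ ξ j = !(η j) ∧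
    ∀ k : Fin r, k ≠ i → k ≠ j → ξ k = η k

/-- `ξ ⪯ η`: `ξ` is obtained from `η` by repeatedly applying elementary moves. -/
def PrecEq {r : ℕ} (ξ η : Fin r → Bool) : Prop :=
  Relation.ReflTransGen ArrowStep η ξ

/-!
Extend `l_p(η)` by zero to all `p : ℕ` and put `d_p = l_p(η) - l_p(ξ)`. A move at `i < j` lowers
`d` by one on `(i, j]` and, on `[0, i]`, by two if `η_i = ∧` and by zero if `η_i = ∨`. So moves
preserve the parity of `d_0` and never increase any `l_p`.

Conversely, let `d ≥ 0` with `d_0` even and `ξ ≠ η`, and let `j` be the last position with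
`d_j > 0`; then `d_j = 1` and `η_j = ∧`. If `d` vanishes somewhere before `j`, the last such zero
`i` has `η_i = ∨`; otherwise `d_0 ≥ 2`, and the position `i` just before `d` first drops to `1`
has `η_i = ∧` and `d ≥ 2` on `[0, i]`. In both cases the move at `(i, j)` keeps `d ≥ 0` and
lowers `∑_p l_p(η)`, so induction on that sum finishes. The bound at `p = 0`, missing from the
hypotheses, follows from the one at `p = 1` and the parity condition.
-/

open Function Finset

variable {r : ℕ}

def wedgesFrom (η : Fin r → Bool) (p : ℕ) : ℕ :=
  ∑ k : Fin r, if p ≤ (k : ℕ) then (η k).toNat else 0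

lemma lFrom_eq_wedgesFrom (η : Fin r → Bool) (i : Fin r) : lFrom η i = wedgesFrom η i := by
  rw [lFrom, card_filter]
  refine sum_congr rfl fun k _ => ?_
  simp only [Fin.le_def]
  cases η k <;> simp

lemma countWedge_eq_wedgesFrom_zero (η : Fin r → Bool) : countWedge η = wedgesFrom η 0 := by
  rw [countWedge, card_filter]
  refine sum_congr rfl fun k _ => ?_
  cases η k <;> simp

lemma wedgesFrom_of_le (η : Fin r → Bool) {p : ℕ} (h : r ≤ p) : wedgesFrom η p = 0 :=
  sum_eq_zero fun k _ => if_neg (by have := k.isLt; omega)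

lemma wedgesFrom_eq_add (η : Fin r → Bool) {p : ℕ} (h : p < r) :
    wedgesFrom η p = (η ⟨p, h⟩).toNat + wedgesFrom η (p + 1) := by
  rw [wedgesFrom, wedgesFrom, Fintype.sum_eq_add_sum_compl ⟨p, h⟩,
    Fintype.sum_eq_add_sum_compl ⟨p, h⟩]
  have hrest : ∀ k ∈ ({⟨p, h⟩}ᶜ : Finset (Fin r)), p ≤ (k : ℕ) ↔ p + 1 ≤ (k : ℕ) := by
    intro k hk
    have : (k : ℕ) ≠ p := fun hkp => by simp [← hkp] at hk
    omega
  simp only [le_refl, if_true, Nat.not_succ_le_self, if_false, zero_add]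
  exact congrArg _ (sum_congr rfl fun k hk => by simp only [hrest k hk])

lemma wedgesFrom_succ_le (η : Fin r → Bool) (p : ℕ) :
    wedgesFrom η (p + 1) ≤ wedgesFrom η p := by
  rcases lt_or_ge p r with h | h
  · rw [wedgesFrom_eq_add η h]; omega
  · simp [wedgesFrom_of_le η h, wedgesFrom_of_le η (h.trans p.le_succ)]

lemma wedgesFrom_le_succ_add_one (η : Fin r → Bool) (p : ℕ) :
    wedgesFrom η p ≤ wedgesFrom η (p + 1) + 1 := by
  rcases lt_or_ge p r with h | h
  · rw [wedgesFrom_eq_add η h]; have := Bool.toNat_le (η ⟨p, h⟩); omega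
  · simp [wedgesFrom_of_le η h]

lemma apply_eq_true_iff_wedgesFrom_lt (η : Fin r → Bool) (k : Fin r) :
    η k = true ↔ wedgesFrom η (k + 1) < wedgesFrom η k := by
  rw [wedgesFrom_eq_add η k.isLt]
  cases η k <;> simp

lemma eq_of_wedgesFrom_eq {ξ η : Fin r → Bool} (h : ∀ p, wedgesFrom ξ p = wedgesFrom η p) :
    ξ = η :=
  funext fun k => by
    rw [Bool.eq_iff_iff, apply_eq_true_iff_wedgesFrom_lt, apply_eq_true_iff_wedgesFrom_lt, h, h]

lemma wedgesFrom_update_add (η : Fin r → Bool) (k : Fin r) (b : Bool) (p : ℕ) :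
    wedgesFrom (update η k b) p + (if p ≤ k then (η k).toNat else 0) =
      wedgesFrom η p + (if p ≤ k then b.toNat else 0) := by
  simp only [wedgesFrom, Fintype.sum_eq_add_sum_compl k, update_self]
  rw [sum_congr rfl fun m hm => by rw [update_of_ne (by simpa using hm)]]
  ring

def flipPair (η : Fin r → Bool) (i j : Fin r) : Fin r → Bool :=
  update (update η i (!η i)) j (!η j)

lemma arrowStep_iff {η ξ : Fin r → Bool} :
    ArrowStep η ξ ↔ ∃ i j, i < j ∧ η j = true ∧ ξ = flipPair η i j := by
  constructor
  · rintro ⟨i, j, hij, hj, hi, hj', hk⟩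
    refine ⟨i, j, hij, hj, funext fun k => ?_⟩
    by_cases hkj : k = j
    · subst hkj; simp [flipPair, hj']
    by_cases hki : k = i
    · subst hki; simp [flipPair, hkj, hi]
    simp [flipPair, hkj, hki, hk k hki hkj]
  · rintro ⟨i, j, hij, hj, rfl⟩
    exact ⟨i, j, hij, hj, by simp [flipPair, hij.ne], by simp [flipPair],
      fun k hki hkj => by simp [flipPair, hki, hkj]⟩

lemma wedgesFrom_flipPair_add (η : Fin r → Bool) {i j : Fin r} (hij : i ≠ j) (p : ℕ) :
    wedgesFrom (flipPair η i j) p +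
        ((if p ≤ i then (η i).toNat else 0) + (if p ≤ j then (η j).toNat else 0)) =
      wedgesFrom η p +
        ((if p ≤ i then (!η i).toNat else 0) + (if p ≤ j then (!η j).toNat else 0)) := by
  have hj := wedgesFrom_update_add (update η i (!η i)) j (!η j) p
  have hi := wedgesFrom_update_add η i (!η i) p
  rw [update_of_ne hij.symm] at hj
  rw [flipPair]
  omega

def WedgeLE (ξ η : Fin r → Bool) : Prop :=
  wedgesFrom ξ 0 ≡ wedgesFrom η 0 [MOD 2] ∧ ∀ p, wedgesFrom ξ p ≤ wedgesFrom η p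

lemma wedgeLE_refl (η : Fin r → Bool) : WedgeLE η η :=
  ⟨rfl, fun _ => le_rfl⟩

lemma WedgeLE.trans {ξ ζ η : Fin r → Bool} (h₁ : WedgeLE ξ ζ) (h₂ : WedgeLE ζ η) :
    WedgeLE ξ η :=
  ⟨h₁.1.trans h₂.1, fun p => (h₁.2 p).trans (h₂.2 p)⟩

lemma ArrowStep.wedgeLE {η ξ : Fin r → Bool} (h : ArrowStep η ξ) : WedgeLE ξ η := by
  obtain ⟨i, j, hij, hj, rfl⟩ := arrowStep_iff.1 h
  have key := wedgesFrom_flipPair_add η hij.ne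
  refine ⟨?_, fun p => ?_⟩
  · have := key 0
    rw [hj] at this
    cases hi : η i <;> simp [hi] at this <;> (unfold Nat.ModEq; omega)
  · have := key p
    rw [hj] at this
    split_ifs at this <;> cases hi : η i <;> simp [hi] at this <;> omega

lemma ArrowStep.sum_wedgesFrom_lt {η ξ : Fin r → Bool} (h : ArrowStep η ξ) :
    ∑ p ∈ range r, wedgesFrom ξ p < ∑ p ∈ range r, wedgesFrom η p := by
  obtain ⟨i, j, hij, hj, rfl⟩ := arrowStep_iff.1 h
  refine sum_lt_sum (fun p _ => h.wedgeLE.2 p) ⟨j, mem_range.2 j.isLt, ?_⟩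
  have := wedgesFrom_flipPair_add η hij.ne j
  have hji : ¬ (j : ℕ) ≤ i := not_le.2 hij
  rw [hj] at this
  simp [hji] at this
  omega

lemma PrecEq.wedgeLE {ξ η : Fin r → Bool} (h : PrecEq ξ η) : WedgeLE ξ η := by
  induction h with
  | refl => exact wedgeLE_refl η
  | tail _ hstep ih => exact hstep.wedgeLE.trans ih

lemma le_wedgesFrom_flipPair {ξ η : Fin r → Bool} {i j : Fin r} (hij : i < j)
    (hj : η j = true)
    (hbefore : ∀ p ≤ (i : ℕ), wedgesFrom ξ p + 2 * (η i).toNat ≤ wedgesFrom η p)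
    (hbetween : ∀ p, (i : ℕ) < p → p ≤ j → wedgesFrom ξ p < wedgesFrom η p)
    (hafter : ∀ p, (j : ℕ) < p → wedgesFrom ξ p ≤ wedgesFrom η p) (p : ℕ) :
    wedgesFrom ξ p ≤ wedgesFrom (flipPair η i j) p := by
  have key := wedgesFrom_flipPair_add η hij.ne p
  have hij' : (i : ℕ) < j := hij
  rw [hj] at key
  by_cases hpi : p ≤ i
  · have := hbefore p hpi
    cases hi : η i <;> simp [hi, hpi, hpi.trans hij'.le] at this key <;> omega
  by_cases hpj : p ≤ j
  · have := hbetween p (not_le.1 hpi) hpj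
    simp [hpi, hpj] at key
    omega
  · have := hafter p (not_le.1 hpj)
    simp [hpi, hpj] at key
    omega

lemma exists_last_gap {ξ η : Fin r → Bool} (hle : ∀ p, wedgesFrom ξ p ≤ wedgesFrom η p)
    (hne : ξ ≠ η) :
    ∃ j : Fin r, η j = true ∧ wedgesFrom η j = wedgesFrom ξ j + 1 ∧
      ∀ q, (j : ℕ) < q → wedgesFrom ξ q = wedgesFrom η q := by
  obtain ⟨p₀, hp₀⟩ : ∃ p, wedgesFrom ξ p < wedgesFrom η p := by
    by_contra! h
    exact hne (eq_of_wedgesFrom_eq fun p => le_antisymm (hle p) (h p))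
  set j := Nat.findGreatest (fun p => wedgesFrom ξ p < wedgesFrom η p) r
  have hp₀r : p₀ ≤ r := by
    by_contra h
    rw [wedgesFrom_of_le η (by omega)] at hp₀
    omega
  have hj : wedgesFrom ξ j < wedgesFrom η j :=
    Nat.findGreatest_spec (P := fun p => wedgesFrom ξ p < wedgesFrom η p) hp₀r hp₀
  have hjr : j < r := by
    by_contra h
    rw [wedgesFrom_of_le η (by omega)] at hj
    omega
  have hafter : ∀ q, j < q → wedgesFrom ξ q = wedgesFrom η q := by
    intro q hq
    rcases le_or_gt q r with hqr | hqr
    · exact le_antisymm (hle q) <| not_lt.1 <|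
        Nat.findGreatest_is_greatest (P := fun p => wedgesFrom ξ p < wedgesFrom η p) hq hqr
    · rw [wedgesFrom_of_le η hqr.le, wedgesFrom_of_le ξ hqr.le]
  have hsucc := hafter (j + 1) j.lt_succ_self
  have := wedgesFrom_succ_le ξ j
  have := wedgesFrom_le_succ_add_one η j
  refine ⟨⟨j, hjr⟩, ?_, by simp only; omega, hafter⟩
  rw [apply_eq_true_iff_wedgesFrom_lt]
  simp only
  omega

lemma exists_le_flipPair_of_eq {ξ η : Fin r → Bool} {j : Fin r} (hj : η j = true)
    (hlt : wedgesFrom ξ j < wedgesFrom η j) (hle : ∀ p, wedgesFrom ξ p ≤ wedgesFrom η p)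
    (heq : ∃ p ≤ (j : ℕ), wedgesFrom ξ p = wedgesFrom η p) :
    ∃ i < j, ∀ p, wedgesFrom ξ p ≤ wedgesFrom (flipPair η i j) p := by
  obtain ⟨p₀, hp₀j, hp₀⟩ := heq
  set i := Nat.findGreatest (fun p => wedgesFrom ξ p = wedgesFrom η p) j
  have hi : wedgesFrom ξ i = wedgesFrom η i :=
    Nat.findGreatest_spec (P := fun p => wedgesFrom ξ p = wedgesFrom η p) hp₀j hp₀
  have hij : i < j := lt_of_le_of_ne (Nat.findGreatest_le _) fun h => by rw [h] at hi; omega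
  have hbetween : ∀ p, i < p → p ≤ j → wedgesFrom ξ p < wedgesFrom η p := fun p h₁ h₂ =>
    lt_of_le_of_ne (hle p) <|
      Nat.findGreatest_is_greatest (P := fun p => wedgesFrom ξ p = wedgesFrom η p) h₁ h₂
  have hηi : η ⟨i, by omega⟩ = false := by
    rw [← Bool.not_eq_true, apply_eq_true_iff_wedgesFrom_lt]
    have := hbetween (i + 1) i.lt_succ_self hij
    have := wedgesFrom_le_succ_add_one ξ i
    simp only
    omega
  exact ⟨⟨i, by omega⟩, hij, le_wedgesFrom_flipPair hij hj (fun p _ => by simp [hηi, hle p])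
    hbetween fun p _ => hle p⟩

lemma exists_le_flipPair_of_lt {ξ η : Fin r → Bool} {j : Fin r} (hj : η j = true)
    (hgap : wedgesFrom η j = wedgesFrom ξ j + 1)
    (hpar : wedgesFrom ξ 0 ≡ wedgesFrom η 0 [MOD 2])
    (hlt : ∀ p ≤ (j : ℕ), wedgesFrom ξ p < wedgesFrom η p)
    (hafter : ∀ p, (j : ℕ) < p → wedgesFrom ξ p ≤ wedgesFrom η p) :
    ∃ i < j, ∀ p, wedgesFrom ξ p ≤ wedgesFrom (flipPair η i j) p := by
  have h₀ : wedgesFrom ξ 0 + 2 ≤ wedgesFrom η 0 := by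
    have := hlt 0 j.val.zero_le
    unfold Nat.ModEq at hpar
    omega
  have hex : ∃ p, wedgesFrom η p ≤ wedgesFrom ξ p + 1 := ⟨j, hgap.le⟩
  set m := Nat.find hex
  have hm : wedgesFrom η m ≤ wedgesFrom ξ m + 1 := Nat.find_spec hex
  have hmj : m ≤ j := Nat.find_min' hex hgap.le
  have hm₀ : m ≠ 0 := fun h => by rw [h] at hm; omega
  have hbefore : ∀ p < m, wedgesFrom ξ p + 2 ≤ wedgesFrom η p := fun p hp => by
    have := Nat.find_min hex hp
    omega
  clear_value m
  obtain ⟨i, rfl⟩ : ∃ i, m = i + 1 := Nat.exists_eq_succ_of_ne_zero hm₀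
  have hηi : η ⟨i, by omega⟩ = true := by
    rw [apply_eq_true_iff_wedgesFrom_lt]
    have := hbefore i i.lt_succ_self
    have := wedgesFrom_succ_le ξ i
    simp only
    omega
  have hij : (⟨i, by omega⟩ : Fin r) < j := Fin.lt_def.2 (by simp only; omega)
  refine ⟨_, hij, le_wedgesFrom_flipPair hij hj (fun p hp => ?_) (fun p _ hp => hlt p hp)
    hafter⟩
  simpa [hηi] using hbefore p (by simp only at hp; omega)

lemma WedgeLE.exists_arrowStep {ξ η : Fin r → Bool} (h : WedgeLE ξ η) (hne : ξ ≠ η) :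
    ∃ η', ArrowStep η η' ∧ WedgeLE ξ η' := by
  obtain ⟨j, hj, hgap, hafter⟩ := exists_last_gap h.2 hne
  obtain ⟨i, hij, hle⟩ : ∃ i < j, ∀ p, wedgesFrom ξ p ≤ wedgesFrom (flipPair η i j) p := by
    by_cases heq : ∃ p ≤ (j : ℕ), wedgesFrom ξ p = wedgesFrom η p
    · exact exists_le_flipPair_of_eq hj (by omega) h.2 heq
    · push Not at heq
      exact exists_le_flipPair_of_lt hj hgap h.1
        (fun p hp => lt_of_le_of_ne (h.2 p) (heq p hp)) fun p hp => (hafter p hp).le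
  have hstep : ArrowStep η (flipPair η i j) := arrowStep_iff.2 ⟨i, j, hij, hj, rfl⟩
  exact ⟨_, hstep, h.1.trans hstep.wedgeLE.1.symm, hle⟩

lemma WedgeLE.precEq {ξ η : Fin r → Bool} (h : WedgeLE ξ η) : PrecEq ξ η := by
  induction hn : ∑ p ∈ range r, wedgesFrom η p using Nat.strong_induction_on
    generalizing η with
  | _ n ih =>
    by_cases hne : ξ = η
    · exact hne ▸ Relation.ReflTransGen.refl
    obtain ⟨η', hstep, h'⟩ := h.exists_arrowStep hne
    exact .head hstep (ih _ (hn ▸ hstep.sum_wedgesFrom_lt) h' rfl)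

lemma wedgeLE_iff {ξ η : Fin r → Bool} : WedgeLE ξ η ↔
    countWedge ξ % 2 = countWedge η % 2 ∧ ∀ i : Fin r, 1 ≤ (i : ℕ) → lFrom ξ i ≤ lFrom η i := by
  simp only [countWedge_eq_wedgesFrom_zero, lFrom_eq_wedgesFrom]
  refine ⟨fun h => ⟨h.1, fun i _ => h.2 i⟩, fun ⟨hpar, hle⟩ => ⟨hpar, ?_⟩⟩
  have hpos : ∀ p, 1 ≤ p → wedgesFrom ξ p ≤ wedgesFrom η p := fun p hp => by
    rcases lt_or_ge p r with hpr | hpr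
    · exact hle ⟨p, hpr⟩ hp
    · simp [wedgesFrom_of_le ξ hpr, wedgesFrom_of_le η hpr]
  rintro (_ | p)
  · have := hpos (0 + 1) le_rfl
    have := wedgesFrom_le_succ_add_one ξ 0
    have := wedgesFrom_succ_le η 0
    omega
  · exact hpos (p + 1) p.succ_pos

/-- `ξ ⪯ η` iff `ξ` and `η` are conjugate (same number of `∧`'s mod 2)
and `l_i(η,ξ) ≥ 0`, i.e. `l_i(ξ) ≤ l_i(η)`, for all `i ∈ {2,…,r}` (0-indexed: `i ≥ 1`). -/
theorem precEq_iff {r : ℕ} (ξ η : Fin r → Bool) :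
    PrecEq ξ η ↔
      (countWedge ξ % 2 = countWedge η % 2 ∧
        ∀ i : Fin r, 1 ≤ (i : ℕ) → lFrom ξ i ≤ lFrom η i) := by
  rw [← wedgeLE_iff]
  exact ⟨PrecEq.wedgeLE, WedgeLE.precEq⟩
end

section
/- Let ξ ⪯ η be {∧,∨}-sequences of length r. Then l(η,ξ) = l(η) − l(ξ) is the minimal number of elementary operations (replacing (∧,∧) in the first two positions, or a consecutive (∨,∧), by the opposite pair) needed to obtain ξ from η; moreover every chain of elementary operations transforming η into ξ has length exactly l(η,ξ). -/
/-- `l(η) = Σ_{i=2}^{r} l_i(η)` (0-indexed: the sum over positions `i ≥ 1`). -/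
def lTot {r : ℕ} (η : Fin r → Bool) : ℕ :=
  ∑ i ∈ Finset.univ.filter (fun i : Fin r => 1 ≤ (i : ℕ)), lFrom η i

/-- An elementary operation: either replace the pair `(∧,∧)` at the first two
positions by `(∨,∨)`, or replace a consecutive pair `(∨,∧)` by `(∧,∨)`. -/
def ElemStep {r : ℕ} (η ξ : Fin r → Bool) : Prop :=
  (∃ (h0 : 0 < r) (h1 : 1 < r),
      η ⟨0, h0⟩ = true ∧ η ⟨1, h1⟩ = true ∧ ξ ⟨0, h0⟩ = false ∧ ξ ⟨1, h1⟩ = false ∧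
      ∀ k : Fin r, (k : ℕ) ≠ 0 → (k : ℕ) ≠ 1 → ξ k = η k) ∨
  (∃ i j : Fin r, (j : ℕ) = (i : ℕ) + 1 ∧ η i = false ∧ η j = true ∧
      ξ i = true ∧ ξ j = false ∧ ∀ k : Fin r, k ≠ i → k ≠ j → ξ k = η k)

/-- A chain of `m` elementary operations transforming `η` into `ξ`. -/
def ElemChain {r : ℕ} (η ξ : Fin r → Bool) (m : ℕ) : Prop :=
  ∃ c : ℕ → (Fin r → Bool), c 0 = η ∧ c m = ξ ∧ ∀ k < m, ElemStep (c k) (c (k + 1))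

/-! Reading `∧` as `true`, `l(η)` is the sum of the (0-based) positions of the `∧`s of `η`, and an
elementary operation lowers it by exactly one; hence every chain from `η` to `ξ` has length
`l(η) - l(ξ)`. For existence, each general move at positions `i < j` is realised by elementary
operations, by induction on the positions: one of the two positions is shifted one step to the
left, the elementary swap there being performed before the shorter move if the entry to its left
is `∨`, and after it otherwise. -/

open Finset Relation

section

variable {r : ℕ}

def flipAt (k : Fin r) (η : Fin r → Bool) : Fin r → Bool :=
  Function.update η k (!η k)

@[simp]
lemma flipAt_apply_self (k : Fin r) (η : Fin r → Bool) : flipAt k η k = !η k :=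
  Function.update_self ..

@[simp]
lemma flipAt_apply_of_ne {k l : Fin r} (η : Fin r → Bool) (h : l ≠ k) : flipAt k η l = η l :=
  Function.update_of_ne h ..

lemma flipAt_apply (k l : Fin r) (η : Fin r → Bool) :
    flipAt k η l = if l = k then !η l else η l := by
  split_ifs with h
  · rw [h, flipAt_apply_self]
  · exact flipAt_apply_of_ne η h

@[simp]
lemma flipAt_flipAt (k : Fin r) (η : Fin r → Bool) : flipAt k (flipAt k η) = η := by
  ext l; by_cases h : l = k <;> simp [h]

lemma flipAt_comm (k l : Fin r) (η : Fin r → Bool) :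
    flipAt k (flipAt l η) = flipAt l (flipAt k η) := by
  ext m; simp only [flipAt_apply]; split_ifs <;> simp_all

lemma eq_flipAt_flipAt {η ξ : Fin r → Bool} {i j : Fin r} (hij : i ≠ j) (hi : ξ i = !η i)
    (hj : ξ j = !η j) (hk : ∀ k, k ≠ i → k ≠ j → ξ k = η k) : ξ = flipAt i (flipAt j η) := by
  ext k; simp only [flipAt_apply]; split_ifs <;> simp_all

lemma lTot_eq_sum (η : Fin r → Bool) : lTot η = ∑ j, if η j then (j : ℕ) else 0 := by
  simp only [lTot, lFrom, card_filter]
  rw [sum_comm]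
  refine sum_congr rfl fun j _ => ?_
  cases η j
  · simp
  · simp only [and_true, if_true, sum_boole, Nat.cast_id]
    calc _ = #(Ioc ⟨0, j.pos⟩ j) := congrArg card (by
          ext i; simp only [mem_filter, mem_univ, mem_Ioc, Fin.lt_def, Fin.le_def, true_and]; omega)
      _ = _ := by simp

lemma lTot_update (η : Fin r → Bool) (k : Fin r) (b : Bool) :
    lTot (Function.update η k b) + (if η k then (k : ℕ) else 0) =
      lTot η + (if b then (k : ℕ) else 0) := by
  simp only [lTot_eq_sum, ← sum_erase_add _ _ (mem_univ k), Function.update_self]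
  rw [sum_congr rfl fun j hj => by rw [Function.update_of_ne (ne_of_mem_erase hj)]]
  ring

lemma lTot_flipAt_add_of_true {η : Fin r → Bool} {k : Fin r} (h : η k = true) :
    lTot (flipAt k η) + k = lTot η := by
  unfold flipAt; simpa [h] using lTot_update η k (!η k)

lemma lTot_flipAt_of_false {η : Fin r → Bool} {k : Fin r} (h : η k = false) :
    lTot (flipAt k η) = lTot η + k := by
  unfold flipAt; simpa [h] using lTot_update η k (!η k)

lemma elemStep_swap {η : Fin r → Bool} {i j : Fin r} (hij : (j : ℕ) = i + 1) (hi : η i = false)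
    (hj : η j = true) : ElemStep η (flipAt i (flipAt j η)) := by
  have hij' : i ≠ j := Fin.ne_of_val_ne (by omega)
  refine .inr ⟨i, j, hij, hi, hj, by simp [hij', hi], by simp [hij'.symm, hj], fun k hki hkj => ?_⟩
  simp [hki, hkj]

lemma elemStep_annihilate {η : Fin r → Bool} {i j : Fin r} (hi0 : (i : ℕ) = 0) (hj1 : (j : ℕ) = 1)
    (hi : η i = true) (hj : η j = true) : ElemStep η (flipAt i (flipAt j η)) := by
  obtain ⟨i, hir⟩ := i
  obtain ⟨j, hjr⟩ := j
  subst hi0 hj1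
  refine .inl ⟨hir, hjr, hi, hj, by simp [hi], by simp [hj], fun k hk0 hk1 => ?_⟩
  rw [flipAt_apply_of_ne _ (Fin.ne_of_val_ne hk0), flipAt_apply_of_ne _ (Fin.ne_of_val_ne hk1)]

lemma lTot_eq_succ_of_elemStep {η ξ : Fin r → Bool} (h : ElemStep η ξ) :
    lTot η = lTot ξ + 1 := by
  rcases h with ⟨h0, h1, hη0, hη1, hξ0, hξ1, hk⟩ | ⟨i, j, hij, hi, hj, hξi, hξj, hk⟩
  · have hze : (⟨0, h0⟩ : Fin r) ≠ ⟨1, h1⟩ := Fin.ne_of_val_ne zero_ne_one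
    rw [eq_flipAt_flipAt hze (by rw [hη0, hξ0]; rfl) (by rw [hη1, hξ1]; rfl)
      fun k hk0 hk1 => hk k (fun h => hk0 (Fin.ext h)) (fun h => hk1 (Fin.ext h))]
    have h1' := lTot_flipAt_add_of_true hη1
    have h0' := lTot_flipAt_add_of_true (η := flipAt ⟨1, h1⟩ η) (k := ⟨0, h0⟩)
      (by rwa [flipAt_apply_of_ne _ hze])
    dsimp only at h1' h0'
    omega
  · have hij' : i ≠ j := Fin.ne_of_val_ne (by omega)
    rw [eq_flipAt_flipAt hij' (by simp [hi, hξi]) (by simp [hj, hξj]) hk]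
    have hj' := lTot_flipAt_add_of_true hj
    have hi' := lTot_flipAt_of_false (η := flipAt j η) (k := i)
      (by rwa [flipAt_apply_of_ne _ hij'])
    omega

lemma reflTransGen_elemStep_shift {η : Fin r → Bool} {a q p : Fin r} (hqp : (p : ℕ) = q + 1)
    (haq : a ≠ q) (hap : a ≠ p) (hp : η p = true)
    (ih : ∀ η' : Fin r → Bool, η' a = η a → η' q = true →
      ReflTransGen ElemStep η' (flipAt a (flipAt q η'))) :
    ReflTransGen ElemStep η (flipAt a (flipAt p η)) := by
  have hqp' : q ≠ p := Fin.ne_of_val_ne (by omega)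
  cases hq : η q
  · refine .head (elemStep_swap hqp hq hp) ?_
    simpa using ih (flipAt q (flipAt p η)) (by simp [haq, hap]) (by simp [hqp', hq])
  · refine .tail (ih η rfl hq) ?_
    convert elemStep_swap (η := flipAt a (flipAt q η)) hqp (by simp [haq.symm, hq])
      (by simp [hap.symm, hqp'.symm, hp]) using 1
    ext l; simp only [flipAt_apply]; split_ifs <;> simp_all

lemma reflTransGen_elemStep_move {η : Fin r → Bool} {i j : Fin r} (hij : i < j)
    (hi : η i = false) (hj : η j = true) : ReflTransGen ElemStep η (flipAt i (flipAt j η)) := by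
  obtain ⟨n, hn⟩ := j
  induction n generalizing η with
  | zero => exact absurd (Fin.lt_def.1 hij) (Nat.not_lt_zero _)
  | succ n ih =>
    rw [Fin.lt_def] at hij
    rcases (show (i : ℕ) = n ∨ (i : ℕ) < n by dsimp only at hij; omega) with hin | hin
    · exact .single (elemStep_swap (by simp [hin]) hi hj)
    · exact reflTransGen_elemStep_shift (q := ⟨n, by omega⟩) rfl (Fin.ne_of_val_ne hin.ne)
        (Fin.ne_of_val_ne (by dsimp only at hij ⊢; omega)) hj
        fun η' hη'i hη'q => ih (hη'i.trans hi) (by omega) hin hη'q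

lemma reflTransGen_elemStep_annihilate {η : Fin r → Bool} {i j : Fin r} (hij : i ≠ j)
    (hi : η i = true) (hj : η j = true) : ReflTransGen ElemStep η (flipAt i (flipAt j η)) := by
  induction hs : (i : ℕ) + j using Nat.strong_induction_on generalizing η i j with
  | _ s ih =>
  wlog hlt : i < j generalizing i j
  · rw [flipAt_comm]
    exact this hij.symm hj hi (by omega) (lt_of_le_of_ne (not_lt.1 hlt) hij.symm)
  rw [Fin.lt_def] at hlt
  rcases Nat.eq_zero_or_pos i with hi0 | hi0
  · rcases (show (j : ℕ) = 1 ∨ 1 < (j : ℕ) by omega) with hj1 | hj1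
    · exact .single (elemStep_annihilate hi0 hj1 hi hj)
    · exact reflTransGen_elemStep_shift (q := ⟨j - 1, by omega⟩) (by dsimp only; omega)
        (Fin.ne_of_val_ne (by dsimp only; omega)) hij hj
        fun η' hη'i hη'q => ih (i + (j - 1)) (by omega) (Fin.ne_of_val_ne (by dsimp only; omega))
          (hη'i.trans hi) hη'q rfl
  · rw [flipAt_comm]
    exact reflTransGen_elemStep_shift (q := ⟨i - 1, by omega⟩) (by dsimp only; omega)
      (Fin.ne_of_val_ne (by dsimp only; omega)) hij.symm hi
      fun η' hη'j hη'q => ih (j + (i - 1)) (by omega) (Fin.ne_of_val_ne (by dsimp only; omega))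
        (hη'j.trans hj) hη'q rfl

lemma reflTransGen_elemStep_of_arrowStep {η ξ : Fin r → Bool} (h : ArrowStep η ξ) :
    ReflTransGen ElemStep η ξ := by
  obtain ⟨i, j, hij, hj, hξi, hξj, hk⟩ := h
  rw [eq_flipAt_flipAt hij.ne hξi hξj hk]
  cases hi : η i
  · exact reflTransGen_elemStep_move hij hi hj
  · exact reflTransGen_elemStep_annihilate hij.ne hi hj

lemma elemChain_cons {η ν ξ : Fin r → Bool} {m : ℕ} (h : ElemStep η ν) (hc : ElemChain ν ξ m) :
    ElemChain η ξ (m + 1) := by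
  obtain ⟨c, hc0, hcm, hstep⟩ := hc
  refine ⟨fun k => if k = 0 then η else c (k - 1), rfl, by simp [hcm], fun k hk => ?_⟩
  rcases k with _ | k
  · simpa [hc0] using h
  · simpa using hstep k (by omega)

lemma exists_elemChain_of_reflTransGen {η ξ : Fin r → Bool} (h : ReflTransGen ElemStep η ξ) :
    ∃ m, ElemChain η ξ m := by
  induction h using ReflTransGen.head_induction_on with
  | refl => exact ⟨0, fun _ => ξ, rfl, rfl, fun _ h => absurd h (Nat.not_lt_zero _)⟩
  | head hstep _ ih =>
    obtain ⟨m, hm⟩ := ih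
    exact ⟨m + 1, elemChain_cons hstep hm⟩

lemma lTot_add_of_elemChain {η ξ : Fin r → Bool} {m : ℕ} (h : ElemChain η ξ m) :
    lTot ξ + m = lTot η := by
  obtain ⟨c, rfl, rfl, hstep⟩ := h
  suffices ∀ k ≤ m, lTot (c k) + k = lTot (c 0) from this m le_rfl
  intro k hk
  induction k with
  | zero => rfl
  | succ k ih =>
    have := lTot_eq_succ_of_elemStep (hstep k hk)
    have := ih (by omega)
    omega

end

/-- if `ξ ⪯ η`, then `ξ` can be obtained from `η` by a chain of exactly
`l(η,ξ) = l(η) − l(ξ)` elementary operations, and every chain of elementary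
operations transforming `η` into `ξ` has length exactly `l(η,ξ)`. -/
theorem lTot_sub_eq_min_elemChain {r : ℕ} (ξ η : Fin r → Bool) (h : PrecEq ξ η) :
    ElemChain η ξ (lTot η - lTot ξ) ∧
      ∀ m : ℕ, ElemChain η ξ m → m = lTot η - lTot ξ := by
  have hE : ReflTransGen ElemStep η ξ :=
    ReflTransGen.lift' id (fun _ _ => reflTransGen_elemStep_of_arrowStep) _ _ h
  obtain ⟨m, hm⟩ := exists_elemChain_of_reflTransGen hE
  refine ⟨?_, fun m' hm' => ?_⟩
  · have := lTot_add_of_elemChain hm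
    rwa [show lTot η - lTot ξ = m by omega]
  · have := lTot_add_of_elemChain hm'
    omega
end

section
/- Let Λ be a finite poset with a subset Λ̃ ⊆ Λ, a poset Λ′, and a surjective 2-to-1 order-preserving map ν ↦ ν′ from Λ̃ onto Λ′ whose fibers are written {ν⁺, ν⁻} with ν⁻ ≺ ν⁺. Let (d_{λμ})_{λ,μ∈Λ} and (d′_{λ′μ′})_{λ′,μ′∈Λ′} be lower uni-triangular matrices over ℤ[q] with inverses (p_{λμ}) = ((d(−q)))⁻¹ and (p′_{λ′μ′}) = ((d′(−q)))⁻¹. Suppose that for every λ = λ⁺ ∈ Λ̃: d_{λ⁺μ⁺} = d′_{λ′μ′} and d_{λ⁺μ⁻} = q·d′_{λ′μ′} for all μ ∈ Λ̃, and d_{λ⁺μ} = 0 for μ ∈ Λ not of the form μ±. Then for every λ = λ⁺ ∈ Λ̃: p_{λ⁺μ⁺} = p′_{λ′μ′} + q·p_{λ⁻μ⁺} for all μ⁺, and p_{λ⁺μ} = q·p_{λ⁻μ} for all μ ∈ Λ not of the form μ⁺. -/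
/-!
Let `S₊, S₋ : Matrix Λ' Λ` be the 0/1 matrices selecting the rows `ν⁺` and `ν⁻`, and put
`E = d(-q)`, `E' = d'(-q)`. Substituting `-q` turns the hypotheses on the rows `ν⁺` of `d` into
the single matrix identity `S₊ E = E' S₊ - q • E' S₋`. Multiplying it by `p' = E'⁻¹` on the left
and by `p = E⁻¹` on the right gives `S₊ p = p' S₊ + q • S₋ p`, whose entries at the columns `μ⁺`
and at the other columns are the two recursions.
-/

open Function

namespace Matrix

variable {ι ι' κ R : Type*} [DecidableEq ι]

section NonAssocSemiring

variable [NonAssocSemiring R]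

theorem one_submatrix_mul_apply [Fintype ι] (f : ι' → ι) (A : Matrix ι κ R) (i : ι') (k : κ) :
    ((1 : Matrix ι ι R).submatrix f id * A) i k = A (f i) k := by
  simp [mul_apply, one_apply]

theorem mul_one_submatrix_apply_self [Fintype ι'] {f : ι' → ι} (hf : Injective f)
    (A : Matrix κ ι' R) (k : κ) (j : ι') :
    (A * (1 : Matrix ι ι R).submatrix f id) k (f j) = A k j := by
  rw [mul_apply, Finset.sum_eq_single j (fun i _ hij => by simp [hf.ne hij]) (by simp),
    submatrix_apply, id_eq, one_apply_eq, mul_one]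

theorem mul_one_submatrix_apply_of_notMem_range [Fintype ι'] {f : ι' → ι} {i : ι}
    (hi : i ∉ Set.range f) (A : Matrix κ ι' R) (k : κ) :
    (A * (1 : Matrix ι ι R).submatrix f id) k i = 0 := by
  simp only [mul_apply, submatrix_apply, id, one_apply]
  exact Finset.sum_eq_zero fun j _ => by rw [if_neg fun h => hi ⟨j, h⟩, mul_zero]

theorem one_submatrix_mul_eq_of_apply [Fintype ι] [Fintype ι'] {f g : ι' → ι}
    (hinj : Injective (Sum.elim f g))
    {E : Matrix ι ι R} {E' : Matrix ι' ι' R} {a : R}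
    (hff : ∀ i j, E (f i) (f j) = E' i j) (hfg : ∀ i j, E (f i) (g j) = a * E' i j)
    (hf0 : ∀ i k, k ∉ Set.range f → k ∉ Set.range g → E (f i) k = 0) :
    (1 : Matrix ι ι R).submatrix f id * E =
      E' * (1 : Matrix ι ι R).submatrix f id + a • (E' * (1 : Matrix ι ι R).submatrix g id) := by
  obtain ⟨hf, hg, hne⟩ := Sum.elim_injective.mp hinj
  ext i k
  rw [one_submatrix_mul_apply, add_apply, smul_apply, smul_eq_mul]
  by_cases hkf : k ∈ Set.range f
  · obtain ⟨j, rfl⟩ := hkf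
    rw [hff, mul_one_submatrix_apply_self hf,
      mul_one_submatrix_apply_of_notMem_range (fun ⟨j', h⟩ => hne j j' h.symm), mul_zero, add_zero]
  by_cases hkg : k ∈ Set.range g
  · obtain ⟨j, rfl⟩ := hkg
    rw [hfg, mul_one_submatrix_apply_of_notMem_range hkf, mul_one_submatrix_apply_self hg,
      zero_add]
  rw [hf0 i k hkf hkg, mul_one_submatrix_apply_of_notMem_range hkf,
    mul_one_submatrix_apply_of_notMem_range hkg, mul_zero, add_zero]

end NonAssocSemiring

theorem mul_eq_sub_smul_of_mul_eq_add_smul [Fintype ι] [Fintype ι'] [DecidableEq ι'] [CommRing R]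
    {A B : Matrix ι' ι R} {E P : Matrix ι ι R}
    {E' P' : Matrix ι' ι' R} {a : R} (hE : A * E = E' * A + a • (E' * B)) (hPE : P * E = 1)
    (hEP : E * P = 1) (hP'E' : P' * E' = 1) : A * P = P' * A - a • (B * P) := by
  have key : (P' * A - a • (B * P)) * E = A := by
    rw [Matrix.sub_mul, Matrix.mul_assoc, hE, Matrix.mul_add, ← Matrix.mul_assoc, hP'E',
      Matrix.one_mul, Matrix.mul_smul, ← Matrix.mul_assoc, hP'E', Matrix.one_mul, Matrix.smul_mul,
      Matrix.mul_assoc, hPE, Matrix.mul_one, add_sub_cancel_right]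
  calc A * P = (P' * A - a • (B * P)) * E * P := by rw [key]
    _ = P' * A - a • (B * P) := by rw [Matrix.mul_assoc, hEP, Matrix.mul_one]

end Matrix

/-- `Λ̃ ⊆ Λ` is encoded as the disjoint union of the ranges of `plus, minus : Λ' → Λ`, the fiber
of `ν'` being `{ν⁺, ν⁻} = {plus ν', minus ν'}`. -/
theorem translation_projection_recursion_general {Λ Λ' : Type*}
    [Fintype Λ] [Fintype Λ'] [DecidableEq Λ] [DecidableEq Λ']
    (plus minus : Λ' → Λ)
    (hinj : Function.Injective (Sum.elim plus minus : Λ' ⊕ Λ' → Λ))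
    (D P : Matrix Λ Λ (Polynomial ℤ)) (D' P' : Matrix Λ' Λ' (Polynomial ℤ))
    (hdpp : ∀ l' m' : Λ', D (plus l') (plus m') = D' l' m')
    (hdpm : ∀ l' m' : Λ', D (plus l') (minus m') = Polynomial.X * D' l' m')
    (hdp0 : ∀ (l' : Λ') (m : Λ), (∀ m' : Λ', m ≠ plus m' ∧ m ≠ minus m') →
      D (plus l') m = 0)
    (hinv1 : (Matrix.of fun l m : Λ => (D l m).comp (-Polynomial.X)) * P = 1)
    (hinv2 : P * (Matrix.of fun l m : Λ => (D l m).comp (-Polynomial.X)) = 1)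
    (hinv2' : P' * (Matrix.of fun l' m' : Λ' => (D' l' m').comp (-Polynomial.X)) = 1) :
    (∀ l' m' : Λ',
        P (plus l') (plus m') = P' l' m' + Polynomial.X * P (minus l') (plus m')) ∧
    (∀ (l' : Λ') (m : Λ), (∀ m' : Λ', m ≠ plus m') →
        P (plus l') m = Polynomial.X * P (minus l') m) := by
  set E := Matrix.of fun l m : Λ => (D l m).comp (-Polynomial.X)
  set E' := Matrix.of fun l' m' : Λ' => (D' l' m').comp (-Polynomial.X)
  have hrows : (1 : Matrix Λ Λ _).submatrix plus id * E =
      E' * (1 : Matrix Λ Λ _).submatrix plus id +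
        (-Polynomial.X) • (E' * (1 : Matrix Λ Λ _).submatrix minus id) :=
    Matrix.one_submatrix_mul_eq_of_apply hinj (fun l' m' => by simp [E, E', hdpp])
      (fun l' m' => by simp [E, E', hdpm, Polynomial.mul_comp])
      (fun l' m hp hm => by
        simp [E, hdp0 l' m fun m' => ⟨fun h => hp ⟨m', h.symm⟩, fun h => hm ⟨m', h.symm⟩⟩])
  have hP := congr_fun₂ (Matrix.mul_eq_sub_smul_of_mul_eq_add_smul hrows hinv2 hinv1 hinv2')
  simp only [Matrix.one_submatrix_mul_apply, Matrix.sub_apply, Matrix.smul_apply, smul_eq_mul,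
    neg_mul, sub_neg_eq_add] at hP
  obtain ⟨hplus, -, -⟩ := Sum.elim_injective.mp hinj
  refine ⟨fun l' m' => ?_, fun l' m hm => ?_⟩
  · rw [hP, Matrix.mul_one_submatrix_apply_self hplus]
  · rw [hP, Matrix.mul_one_submatrix_apply_of_notMem_range (fun ⟨m', h⟩ => hm m' h.symm),
      zero_add]

/-- abstract translation-projection recursion for the `p`-polynomials.
`Λ̃ ⊆ Λ` is encoded as the (disjoint) union of the ranges of the fiber maps
`plus, minus : Λ' → Λ`, so that the fiber of `ν' ∈ Λ'` is `{ν⁺, ν⁻} = {plus ν', minus ν'}`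
with `ν⁻ ≺ ν⁺`, the map `ν ↦ ν'` being 2-to-1, surjective and order-preserving. -/
theorem translation_projection_recursion {Λ Λ' : Type*}
    [Fintype Λ] [Fintype Λ'] [DecidableEq Λ] [DecidableEq Λ']
    [PartialOrder Λ] [PartialOrder Λ']
    (plus minus : Λ' → Λ)
    (hinj : Function.Injective (Sum.elim plus minus : Λ' ⊕ Λ' → Λ))
    (hlt : ∀ l' : Λ', minus l' < plus l')
    (hmono : ∀ l' m' : Λ', l' ≤ m' → plus l' ≤ plus m' ∧ minus l' ≤ minus m')
    (D P : Matrix Λ Λ (Polynomial ℤ)) (D' P' : Matrix Λ' Λ' (Polynomial ℤ))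
    (hdiag : ∀ l : Λ, D l l = 1) (htri : ∀ l m : Λ, D l m ≠ 0 → m ≤ l)
    (hdiag' : ∀ l' : Λ', D' l' l' = 1) (htri' : ∀ l' m' : Λ', D' l' m' ≠ 0 → m' ≤ l')
    (hdpp : ∀ l' m' : Λ', D (plus l') (plus m') = D' l' m')
    (hdpm : ∀ l' m' : Λ', D (plus l') (minus m') = Polynomial.X * D' l' m')
    (hdp0 : ∀ (l' : Λ') (m : Λ), (∀ m' : Λ', m ≠ plus m' ∧ m ≠ minus m') →
      D (plus l') m = 0)
    (hinv1 : (Matrix.of fun l m : Λ => (D l m).comp (-Polynomial.X)) * P = 1)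
    (hinv2 : P * (Matrix.of fun l m : Λ => (D l m).comp (-Polynomial.X)) = 1)
    (hinv1' : (Matrix.of fun l' m' : Λ' => (D' l' m').comp (-Polynomial.X)) * P' = 1)
    (hinv2' : P' * (Matrix.of fun l' m' : Λ' => (D' l' m').comp (-Polynomial.X)) = 1) :
    (∀ l' m' : Λ',
        P (plus l') (plus m') = P' l' m' + Polynomial.X * P (minus l') (plus m')) ∧
    (∀ (l' : Λ') (m : Λ), (∀ m' : Λ', m ≠ plus m') →
        P (plus l') m = Polynomial.X * P (minus l') m) :=
  translation_projection_recursion_general plus minus hinj D P D' P' hdpp hdpm hdp0 hinv1 hinv2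
    hinv2'
end

section
/- Let Λ be a finite poset and let (e_{λμ}) be a lower uni-triangular matrix over ℤ[q] with inverse (r_{λμ}) of (e_{λμ}(−q)). Suppose every nonzero e_{λμ} with λ ≠ μ lies in qℤ[q]. Then for the matrix (t_{λμ}) defined by t_{λμ} = Σ_{ν ⪯ λ, ν ⪯ μ} r_{λν} r_{μν}, each t_{λμ} with λ ≠ μ lies in qℤ[q], and t_{λλ} has constant term 1. -/
/-!
Specialising `q = 0` turns every matrix in sight into a matrix over `ℤ`. Since `E` has
unit diagonal and off-diagonal entries in `qℤ[q]`, the constant-term matrix of `E(−q)` is the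
identity, hence so is that of its inverse `r`. The constant term of
`t_{λμ} = Σ_ν r_{λν} r_{μν}` is then `Σ_ν δ_{λν} δ_{μν} = δ_{λμ}`, because `ν = λ` is allowed in
the sum.
-/

open Polynomial

theorem Polynomial.coeff_zero_comp_neg_X {R : Type*} [CommRing R] (p : R[X]) :
    (p.comp (-X)).coeff 0 = p.coeff 0 := by
  rw [coeff_zero_eq_eval_zero, coeff_zero_eq_eval_zero, eval_comp]
  simp

namespace Matrix

variable {n R S : Type*} [DecidableEq n] [Semiring R] [Semiring S]

theorem map_eq_one_of_mul_eq_one [Fintype n] (f : R →+* S) {A B : Matrix n n R}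
    (hAB : A * B = 1) (hA : A.map f = 1) : B.map f = 1 := by
  simpa [map_mul, hA] using congrArg (·.map f) hAB

theorem map_sum_mul_apply_of_map_eq_one (f : R →+* S) {M : Matrix n n R} (hM : M.map f = 1)
    (s : Finset n) (l m : n) :
    f (∑ ν ∈ s, M l ν * M m ν) = if l ∈ s ∧ l = m then 1 else 0 := by
  have hf : ∀ i j, f (M i j) = (1 : Matrix n n S) i j := fun i j => congrFun (congrFun hM i) j
  simp only [map_sum, map_mul, hf, one_apply, ite_mul, one_mul, zero_mul, Finset.sum_ite_eq]
  by_cases hl : l ∈ s <;> by_cases hlm : l = m <;> simp [hl, hlm, eq_comm]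

end Matrix

theorem constantCoeff_map_comp_neg_X_eq_one {Λ : Type*} [DecidableEq Λ]
    (E : Matrix Λ Λ ℤ[X]) (hdiag : ∀ l, E l l = 1)
    (hconst : ∀ l m, l ≠ m → (E l m).coeff 0 = 0) :
    (Matrix.of fun l m => (E l m).comp (-X)).map constantCoeff = 1 := by
  ext l m
  simp only [Matrix.map_apply, Matrix.of_apply, constantCoeff_apply, coeff_zero_comp_neg_X]
  by_cases hlm : l = m
  · subst hlm
    simp [hdiag]
  · rw [Matrix.one_apply_ne hlm, hconst l m hlm]

theorem t_matrix_constant_terms_general {Λ : Type*} [Fintype Λ] [DecidableEq Λ] [PartialOrder Λ]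
    [DecidableRel ((· ≤ ·) : Λ → Λ → Prop)]
    (E Rm : Matrix Λ Λ (Polynomial ℤ))
    (hdiag : ∀ l : Λ, E l l = 1)
    (hconst : ∀ l m : Λ, l ≠ m → (E l m).coeff 0 = 0)
    (hinv1 : (Matrix.of fun l m : Λ => (E l m).comp (-Polynomial.X)) * Rm = 1) :
    (∀ l m : Λ, l ≠ m →
      (∑ ν ∈ Finset.univ.filter (fun ν : Λ => ν ≤ l ∧ ν ≤ m), Rm l ν * Rm m ν).coeff 0 = 0) ∧
    (∀ l : Λ,
      (∑ ν ∈ Finset.univ.filter (fun ν : Λ => ν ≤ l ∧ ν ≤ l), Rm l ν * Rm l ν).coeff 0 = 1) := by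
  have hRm : Rm.map constantCoeff = 1 :=
    Matrix.map_eq_one_of_mul_eq_one _ hinv1 (constantCoeff_map_comp_neg_X_eq_one E hdiag hconst)
  have ht := Matrix.map_sum_mul_apply_of_map_eq_one _ hRm
  refine ⟨fun l m hlm => ?_, fun l => ?_⟩
  · simpa [hlm] using ht (Finset.univ.filter fun ν => ν ≤ l ∧ ν ≤ m) l m
  · simpa using ht (Finset.univ.filter fun ν => ν ≤ l ∧ ν ≤ l) l l

/-- let `(e_{λμ})` be lower uni-triangular over `ℤ[q]` with off-diagonal
entries in `qℤ[q]`, and let `(r_{λμ})` be the inverse of `(e_{λμ}(−q))`. Then the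
matrix `t_{λμ} = Σ_{ν ⪯ λ, ν ⪯ μ} r_{λν} r_{μν}` has off-diagonal entries in `qℤ[q]`
and its diagonal entries have constant term `1`. -/
theorem t_matrix_constant_terms {Λ : Type*} [Fintype Λ] [DecidableEq Λ] [PartialOrder Λ]
    [DecidableRel ((· ≤ ·) : Λ → Λ → Prop)]
    (E Rm : Matrix Λ Λ (Polynomial ℤ))
    (hdiag : ∀ l : Λ, E l l = 1)
    (htri : ∀ l m : Λ, E l m ≠ 0 → m ≤ l)
    (hconst : ∀ l m : Λ, l ≠ m → (E l m).coeff 0 = 0)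
    (hinv1 : (Matrix.of fun l m : Λ => (E l m).comp (-Polynomial.X)) * Rm = 1)
    (hinv2 : Rm * (Matrix.of fun l m : Λ => (E l m).comp (-Polynomial.X)) = 1) :
    (∀ l m : Λ, l ≠ m →
      (∑ ν ∈ Finset.univ.filter (fun ν : Λ => ν ≤ l ∧ ν ≤ m), Rm l ν * Rm m ν).coeff 0 = 0) ∧
    (∀ l : Λ,
      (∑ ν ∈ Finset.univ.filter (fun ν : Λ => ν ≤ l ∧ ν ≤ l), Rm l ν * Rm l ν).coeff 0 = 1) :=
  t_matrix_constant_terms_general E Rm hdiag hconst hinv1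
end
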